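/- For every n ∈ ℕ and every real ξ > 0, ∫_{−1}^{1} Pₙ(s)/√(cosh ξ − s) ds = (2√2/(2n+1)) · e^{−(n+1/2)ξ}. -/

import Mathlib

/-!
Write `c = cosh ξ` and `Jₙ = ∫_{-1}^{1} Pₙ(s) / √(c - s) ds`. Bonnet's recursion
`(n + 2) P_{n+2} = (2n + 3) s P_{n+1} - (n + 1) Pₙ`, the splitting
`s / √(c - s) = c / √(c - s) - √(c - s)`, and an integration by parts of
`(2n + 3) P_{n+1} = (P_{n+2} - Pₙ)'` against `√(c - s)` (no boundary terms, as
`P_{n+2}(±1) = Pₙ(±1)`) show that `Kₙ = (2n + 1) Jₙ` satisfies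
`K_{n+2} = 2c K_{n+1} - Kₙ`. Since `2c = e^ξ + e^{-ξ}`, so does `e^{-(n + 1/2) ξ}`, and the two
sequences agree at `n = 0, 1`, where the integrals are elementary.
-/

/-- The degree-`n` Legendre polynomial, via Rodrigues' formula. -/
noncomputable def legendreP (n : ℕ) (s : ℝ) : ℝ :=
  (1 : ℝ) / (2 ^ n * (n.factorial : ℝ)) *
    iteratedDeriv n (fun x : ℝ => (x ^ 2 - 1) ^ n) s

open Polynomial

section Rodrigues

variable {R : Type*} [CommRing R]

noncomputable def rodrigues (n : ℕ) : R[X] := derivative^[n] ((X ^ 2 - 1) ^ n)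

lemma derivative_sq_sub_one_pow_succ (n : ℕ) :
    derivative (((X : R[X]) ^ 2 - 1) ^ (n + 1)) =
      ((2 * (n + 1) : ℕ) : R[X]) * ((X ^ 2 - 1) ^ n * X) := by
  rw [derivative_pow, derivative_sub, derivative_X_sq, derivative_one, C_ofNat, C_eq_natCast]
  push_cast
  ring

lemma derivative_rodrigues_succ (n : ℕ) :
    derivative (rodrigues (n + 1) : R[X]) =
      2 * (n + 1 : R[X]) * (X * derivative (rodrigues n) + (n + 1 : R[X]) * rodrigues n) := by
  simp only [rodrigues]
  rw [← Function.iterate_succ_apply' derivative, Function.iterate_succ_apply,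
    derivative_sq_sub_one_pow_succ, iterate_derivative_natCast_mul, iterate_derivative_mul_X,
    ← Function.iterate_succ_apply' derivative]
  simp only [nsmul_eq_mul, add_tsub_cancel_right]
  push_cast
  ring

lemma X_mul_derivative_rodrigues_succ (n : ℕ) :
    X * derivative (rodrigues (n + 1) : R[X]) =
      (n + 1 : R[X]) * rodrigues (n + 1) + 2 * (n + 1 : R[X]) * derivative (rodrigues n) := by
  have h := iterate_derivative_derivative_mul_X (n := n + 1) (((X : R[X]) ^ 2 - 1) ^ (n + 1))
  have hX : derivative (((X : R[X]) ^ 2 - 1) ^ (n + 1)) * X =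
      ((2 * (n + 1) : ℕ) : R[X]) * ((X ^ 2 - 1) ^ (n + 1) + (X ^ 2 - 1) ^ n) := by
    rw [derivative_sq_sub_one_pow_succ]; ring
  rw [hX, iterate_derivative_natCast_mul, iterate_map_add] at h
  simp only [rodrigues]
  rw [← Function.iterate_succ_apply' derivative, ← Function.iterate_succ_apply' derivative]
  simp only [nsmul_eq_mul] at h
  push_cast at h ⊢
  linear_combination -h

end Rodrigues

section Legendre

variable {K : Type*} [Field K]

variable (K) in
noncomputable def legendrePoly (n : ℕ) : K[X] :=
  C (2 ^ n * n.factorial : K)⁻¹ * rodrigues n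

lemma legendrePoly_zero : legendrePoly K 0 = 1 := by
  simp [legendrePoly, rodrigues]

variable [CharZero K]

lemma legendrePoly_one : legendrePoly K 1 = X := by
  simp only [legendrePoly, rodrigues, Function.iterate_one, pow_one, derivative_sub,
    derivative_X_sq, derivative_one, sub_zero, ← mul_assoc, ← C_mul]
  norm_num

lemma C_inv_two_pow_mul_factorial_succ (n : ℕ) :
    C (2 ^ (n + 1) * (n + 1).factorial : K)⁻¹ * (2 * (n + 1 : K[X])) =
      C (2 ^ n * n.factorial : K)⁻¹ := by
  have hC : (2 * (n + 1 : K[X])) = C (2 * (n + 1 : K)) := by simp [C_ofNat]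
  rw [hC, ← C_mul]
  congr 1
  rw [Nat.factorial_succ]
  push_cast
  field_simp
  ring

lemma derivative_legendrePoly_succ (n : ℕ) :
    derivative (legendrePoly K (n + 1)) =
      X * derivative (legendrePoly K n) + (n + 1 : K[X]) * legendrePoly K n := by
  simp only [legendrePoly, derivative_C_mul, derivative_rodrigues_succ]
  rw [← C_inv_two_pow_mul_factorial_succ n]
  ring

lemma X_mul_derivative_legendrePoly_succ (n : ℕ) :
    X * derivative (legendrePoly K (n + 1)) =
      (n + 1 : K[X]) * legendrePoly K (n + 1) + derivative (legendrePoly K n) := by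
  simp only [legendrePoly, derivative_C_mul]
  rw [mul_left_comm, X_mul_derivative_rodrigues_succ, ← C_inv_two_pow_mul_factorial_succ n]
  ring

lemma derivative_legendrePoly_add_two (n : ℕ) :
    derivative (legendrePoly K (n + 2)) =
      derivative (legendrePoly K n) + (2 * n + 3 : K[X]) * legendrePoly K (n + 1) := by
  linear_combination (norm := (push_cast; ring))
    derivative_legendrePoly_succ (K := K) (n + 1) + X_mul_derivative_legendrePoly_succ (K := K) n

lemma sq_sub_one_mul_derivative_legendrePoly_succ (n : ℕ) :
    (X ^ 2 - 1) * derivative (legendrePoly K (n + 1)) =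
      (n + 1 : K[X]) * (X * legendrePoly K (n + 1) - legendrePoly K n) := by
  linear_combination X * X_mul_derivative_legendrePoly_succ (K := K) n -
    derivative_legendrePoly_succ (K := K) n

lemma legendrePoly_add_two (n : ℕ) :
    (n + 2 : K[X]) * legendrePoly K (n + 2) =
      (2 * n + 3 : K[X]) * X * legendrePoly K (n + 1) - (n + 1 : K[X]) * legendrePoly K n := by
  refine mul_left_cancel₀ (X_ne_zero (R := K)) ?_
  linear_combination (norm := (push_cast; ring))
    (X ^ 2 - 1) * derivative_legendrePoly_succ (K := K) (n + 1) -
      sq_sub_one_mul_derivative_legendrePoly_succ (K := K) (n + 1) +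
      X * sq_sub_one_mul_derivative_legendrePoly_succ (K := K) n

lemma eval_legendrePoly_succ_of_sq_eq_one {x : K} (hx : x ^ 2 = 1) (n : ℕ) :
    (legendrePoly K (n + 1)).eval x = x * (legendrePoly K n).eval x := by
  have h := congrArg (eval x) (sq_sub_one_mul_derivative_legendrePoly_succ (K := K) n)
  simp only [eval_mul, eval_sub, eval_pow, eval_X, eval_one, eval_add, eval_natCast, hx,
    sub_self, zero_mul] at h
  have hx' := (mul_eq_zero.1 h.symm).resolve_left (Nat.cast_add_one_ne_zero n)
  linear_combination x * hx' - (legendrePoly K (n + 1)).eval x * hx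

lemma eval_legendrePoly_add_two_of_sq_eq_one {x : K} (hx : x ^ 2 = 1) (n : ℕ) :
    (legendrePoly K (n + 2)).eval x = (legendrePoly K n).eval x := by
  rw [eval_legendrePoly_succ_of_sq_eq_one hx, eval_legendrePoly_succ_of_sq_eq_one hx, ← mul_assoc,
    ← sq, hx, one_mul]

end Legendre

lemma iteratedDeriv_eval {𝕜 : Type*} [NontriviallyNormedField 𝕜] (p : 𝕜[X]) (k : ℕ) :
    iteratedDeriv k (fun x => p.eval x) = fun x => (derivative^[k] p).eval x := by
  induction k with
  | zero => simp
  | succ k ih =>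
    rw [iteratedDeriv_succ, ih, Function.iterate_succ_apply']
    exact funext fun x => Polynomial.deriv _

lemma legendreP_eq_eval (n : ℕ) (s : ℝ) : legendreP n s = (legendrePoly ℝ n).eval s := by
  have hpoly : (fun x : ℝ => (x ^ 2 - 1) ^ n) = fun x => (((X : ℝ[X]) ^ 2 - 1) ^ n).eval x := by
    simp
  rw [legendreP, hpoly, iteratedDeriv_eval, legendrePoly, rodrigues, eval_mul, eval_C, one_div]

open Real Set intervalIntegral MeasureTheory

section SqrtKernel

variable {a b c : ℝ}

lemma lt_of_mem_uIcc_of_lt (ha : a < c) (hb : b < c) {s : ℝ} (hs : s ∈ uIcc a b) : s < c :=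
  hs.2.trans_lt (sup_lt_iff.2 ⟨ha, hb⟩)

lemma hasDerivAt_sqrt_const_sub {s : ℝ} (hs : s < c) :
    HasDerivAt (fun t => √(c - t)) (-1 / (2 * √(c - s))) s :=
  ((hasDerivAt_id s).const_sub c).sqrt (sub_ne_zero.2 hs.ne')

lemma intervalIntegrable_div_sqrt_const_sub {f : ℝ → ℝ} (hf : Continuous f) (ha : a < c)
    (hb : b < c) : IntervalIntegrable (fun s => f s / √(c - s)) volume a b := by
  refine ContinuousOn.intervalIntegrable (hf.continuousOn.div (by fun_prop) fun s hs => ?_)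
  exact (sqrt_pos.2 (sub_pos.2 (lt_of_mem_uIcc_of_lt ha hb hs))).ne'

lemma integral_derivative_mul_sqrt_const_sub (ha : a < c) (hb : b < c) {p : ℝ[X]}
    (hpa : p.eval a = 0) (hpb : p.eval b = 0) :
    ∫ s in a..b, p.derivative.eval s * √(c - s) =
      (∫ s in a..b, p.eval s / √(c - s)) / 2 := by
  have hv' : IntervalIntegrable (fun s => -1 / (2 * √(c - s))) volume a b := by
    convert (intervalIntegrable_div_sqrt_const_sub (f := fun _ => -1) continuous_const ha
      hb).div_const 2 using 1
    funext s; ring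
  have key := integral_mul_deriv_eq_deriv_mul (fun s _ => p.hasDerivAt s)
    (fun s hs => hasDerivAt_sqrt_const_sub (lt_of_mem_uIcc_of_lt ha hb hs))
    (p.derivative.continuous.intervalIntegrable a b) hv'
  have hneg : (fun s => p.eval s * (-1 / (2 * √(c - s)))) =
      fun s => -(p.eval s / √(c - s) / 2) := by
    funext s; ring
  rw [hpa, hpb, zero_mul, zero_mul, sub_zero, zero_sub, hneg, intervalIntegral.integral_neg,
    intervalIntegral.integral_div] at key
  linarith

lemma integral_one_div_sqrt_const_sub (ha : a < c) (hb : b < c) :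
    ∫ s in a..b, 1 / √(c - s) = 2 * (√(c - a) - √(c - b)) := by
  have hderiv : ∀ s ∈ uIcc a b, HasDerivAt (fun t => -2 * √(c - t)) (1 / √(c - s)) s := by
    intro s hs
    have hpos := sqrt_pos.2 (sub_pos.2 (lt_of_mem_uIcc_of_lt ha hb hs))
    refine ((hasDerivAt_sqrt_const_sub (lt_of_mem_uIcc_of_lt ha hb hs)).const_mul
      (-2)).congr_deriv ?_
    field_simp
  rw [integral_eq_sub_of_hasDerivAt hderiv
    (intervalIntegrable_div_sqrt_const_sub continuous_const ha hb)]
  ring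

lemma integral_div_sqrt_const_sub (ha : a < c) (hb : b < c) :
    ∫ s in a..b, s / √(c - s) =
      2 / 3 * ((2 * c + a) * √(c - a) - (2 * c + b) * √(c - b)) := by
  have hderiv : ∀ s ∈ uIcc a b,
      HasDerivAt (fun t => -(2 / 3) * ((2 * c + t) * √(c - t))) (s / √(c - s)) s := by
    intro s hs
    have hs' := sub_pos.2 (lt_of_mem_uIcc_of_lt ha hb hs)
    have hpos := sqrt_pos.2 hs'
    refine ((((hasDerivAt_id' s).const_add (2 * c)).mul
      (hasDerivAt_sqrt_const_sub (lt_of_mem_uIcc_of_lt ha hb hs))).const_mul _).congr_deriv ?_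
    field_simp
    linear_combination (-2 : ℝ) * sq_sqrt hs'.le
  rw [integral_eq_sub_of_hasDerivAt hderiv
    (intervalIntegrable_div_sqrt_const_sub continuous_id ha hb)]
  ring

end SqrtKernel

section LegendreSqrtIntegral

variable {c : ℝ}

noncomputable def legendreSqrtIntegral (c : ℝ) (n : ℕ) : ℝ :=
  ∫ s in (-1 : ℝ)..1, (legendrePoly ℝ n).eval s / √(c - s)

lemma intervalIntegrable_legendrePoly_div_sqrt (hc : 1 < c) (n : ℕ) :
    IntervalIntegrable (fun s => (legendrePoly ℝ n).eval s / √(c - s)) volume (-1) 1 :=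
  intervalIntegrable_div_sqrt_const_sub (legendrePoly ℝ n).continuous (by linarith) hc

lemma legendreSqrtIntegral_zero (hc : 1 < c) :
    legendreSqrtIntegral c 0 = 2 * (√(c + 1) - √(c - 1)) := by
  simp only [legendreSqrtIntegral, legendrePoly_zero, eval_one]
  rw [integral_one_div_sqrt_const_sub (by linarith) hc, sub_neg_eq_add]

lemma legendreSqrtIntegral_one (hc : 1 < c) :
    legendreSqrtIntegral c 1 = 2 / 3 * ((2 * c - 1) * √(c + 1) - (2 * c + 1) * √(c - 1)) := by
  simp only [legendreSqrtIntegral, legendrePoly_one, eval_X]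
  rw [integral_div_sqrt_const_sub (by linarith) hc, sub_neg_eq_add]
  ring

lemma integral_legendrePoly_mul_sqrt (hc : 1 < c) (n : ℕ) :
    (2 * n + 3) * ∫ s in (-1 : ℝ)..1, (legendrePoly ℝ (n + 1)).eval s * √(c - s) =
      (legendreSqrtIntegral c (n + 2) - legendreSqrtIntegral c n) / 2 := by
  have hvanish {x : ℝ} (hx : x ^ 2 = 1) :
      (legendrePoly ℝ (n + 2) - legendrePoly ℝ n).eval x = 0 := by
    rw [eval_sub, eval_legendrePoly_add_two_of_sq_eq_one hx, sub_self]
  have hibp := integral_derivative_mul_sqrt_const_sub (by linarith) hc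
    (hvanish (x := -1) (by norm_num)) (hvanish (x := 1) (by norm_num))
  simp only [derivative_sub, derivative_legendrePoly_add_two, add_sub_cancel_left, eval_mul,
    eval_add, eval_mul, eval_ofNat, eval_natCast, eval_sub, sub_div, mul_assoc] at hibp
  rw [intervalIntegral.integral_const_mul, intervalIntegral.integral_sub
    (intervalIntegrable_legendrePoly_div_sqrt hc _)
    (intervalIntegrable_legendrePoly_div_sqrt hc _)] at hibp
  exact hibp

lemma legendreSqrtIntegral_bonnet (hc : 1 < c) (n : ℕ) :
    (n + 2) * legendreSqrtIntegral c (n + 2) + (n + 1) * legendreSqrtIntegral c n =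
      (2 * n + 3) * (c * legendreSqrtIntegral c (n + 1) -
        ∫ s in (-1 : ℝ)..1, (legendrePoly ℝ (n + 1)).eval s * √(c - s)) := by
  have hpointwise : EqOn
      (fun s => (n + 2) * ((legendrePoly ℝ (n + 2)).eval s / √(c - s)) +
        (n + 1) * ((legendrePoly ℝ n).eval s / √(c - s)))
      (fun s => (2 * n + 3) * (c * ((legendrePoly ℝ (n + 1)).eval s / √(c - s)) -
        (legendrePoly ℝ (n + 1)).eval s * √(c - s)))
      (uIcc (-1) 1) := by
    intro s hs
    have hs' := sub_pos.2 (lt_of_mem_uIcc_of_lt (by linarith) hc hs)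
    have hbonnet := congrArg (eval s) (legendrePoly_add_two (K := ℝ) n)
    simp only [eval_mul, eval_add, eval_sub, eval_natCast, eval_ofNat, eval_X, eval_one]
      at hbonnet
    have hsqrt := (sqrt_pos.2 hs').ne'
    field_simp
    linear_combination hbonnet + (2 * n + 3) * (legendrePoly ℝ (n + 1)).eval s * sq_sqrt hs'.le
  rw [legendreSqrtIntegral, legendreSqrtIntegral, legendreSqrtIntegral,
    ← intervalIntegral.integral_const_mul, ← intervalIntegral.integral_const_mul,
    ← intervalIntegral.integral_add, integral_congr hpointwise,
    intervalIntegral.integral_const_mul, intervalIntegral.integral_sub,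
    intervalIntegral.integral_const_mul]
  · exact (intervalIntegrable_legendrePoly_div_sqrt hc _).const_mul c
  · exact Continuous.intervalIntegrable (by fun_prop) _ _
  · exact (intervalIntegrable_legendrePoly_div_sqrt hc _).const_mul _
  · exact (intervalIntegrable_legendrePoly_div_sqrt hc _).const_mul _

lemma legendreSqrtIntegral_add_two (hc : 1 < c) (n : ℕ) :
    (2 * n + 5) * legendreSqrtIntegral c (n + 2) =
      2 * (2 * n + 3) * c * legendreSqrtIntegral c (n + 1) -
        (2 * n + 1) * legendreSqrtIntegral c n := by
  linear_combination 2 * legendreSqrtIntegral_bonnet hc n - 2 * integral_legendrePoly_mul_sqrt hc n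

end LegendreSqrtIntegral

lemma cosh_eq_cosh_half_sq_add_sinh_half_sq (ξ : ℝ) :
    cosh ξ = cosh (ξ / 2) ^ 2 + sinh (ξ / 2) ^ 2 := by
  rw [← cosh_two_mul, mul_div_cancel₀ _ two_ne_zero]

lemma sqrt_cosh_add_one (ξ : ℝ) : √(cosh ξ + 1) = √2 * cosh (ξ / 2) := by
  have h : cosh ξ + 1 = 2 * cosh (ξ / 2) ^ 2 := by
    linear_combination cosh_eq_cosh_half_sq_add_sinh_half_sq ξ - cosh_sq (ξ / 2)
  rw [h, sqrt_mul zero_le_two, sqrt_sq (cosh_pos _).le]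

lemma sqrt_cosh_sub_one {ξ : ℝ} (hξ : 0 ≤ ξ) : √(cosh ξ - 1) = √2 * sinh (ξ / 2) := by
  have h : cosh ξ - 1 = 2 * sinh (ξ / 2) ^ 2 := by
    linear_combination cosh_eq_cosh_half_sq_add_sinh_half_sq ξ + cosh_sq (ξ / 2)
  rw [h, sqrt_mul zero_le_two, sqrt_sq (sinh_nonneg_iff.2 (by linarith))]

lemma exp_neg_add_two_add_half_mul (ξ : ℝ) (n : ℕ) :
    exp (-(n + 2 + 1 / 2) * ξ) =
      2 * cosh ξ * exp (-(n + 1 + 1 / 2) * ξ) - exp (-(n + 1 / 2) * ξ) := by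
  rw [cosh_eq, mul_div_cancel₀ _ two_ne_zero, add_mul, ← exp_add, ← exp_add]
  ring_nf

lemma legendreSqrtIntegral_cosh {ξ : ℝ} (hξ : 0 < ξ) (n : ℕ) :
    (2 * n + 1) * legendreSqrtIntegral (cosh ξ) n = 2 * √2 * exp (-(n + 1 / 2) * ξ) := by
  have hc : 1 < cosh ξ := one_lt_cosh.2 hξ.ne'
  induction n using Nat.twoStepInduction with
  | zero =>
    rw [legendreSqrtIntegral_zero hc, sqrt_cosh_add_one, sqrt_cosh_sub_one hξ.le,
      show -((0 : ℕ) + 1 / 2 : ℝ) * ξ = -(ξ / 2) by push_cast; ring, ← cosh_sub_sinh]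
    push_cast
    ring
  | one =>
    rw [legendreSqrtIntegral_one hc, sqrt_cosh_add_one, sqrt_cosh_sub_one hξ.le,
      show -((1 : ℕ) + 1 / 2 : ℝ) * ξ = (3 : ℕ) * -(ξ / 2) by push_cast; ring, exp_nat_mul,
      ← cosh_sub_sinh, cosh_eq_cosh_half_sq_add_sinh_half_sq ξ]
    push_cast
    linear_combination 2 * √2 * (cosh (ξ / 2) + sinh (ξ / 2)) * cosh_sq (ξ / 2)
  | more n ih₀ ih₁ =>
    push_cast at ih₀ ih₁ ⊢
    linear_combination legendreSqrtIntegral_add_two hc n + 2 * cosh ξ * ih₁ - ih₀ -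
      2 * √2 * exp_neg_add_two_add_half_mul ξ n

theorem legendre_integral_sqrt (n : ℕ) (ξ : ℝ) (hξ : 0 < ξ) :
    ∫ s in (-1 : ℝ)..1, legendreP n s / Real.sqrt (Real.cosh ξ - s) =
      2 * Real.sqrt 2 / (2 * n + 1) * Real.exp (-(n + 1 / 2) * ξ) := by
  simp_rw [legendreP_eq_eval]
  change legendreSqrtIntegral (cosh ξ) n = _
  rw [div_mul_eq_mul_div, eq_div_iff (by positivity), ← legendreSqrtIntegral_cosh hξ n, mul_comm]
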